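/- arXiv:2604.24518 — 3 statements merged into one kernel-verified Lean document; each statement's English description precedes it below -/
import Mathlib

section
/- Let S : ℝ → ℝⁿ be differentiable with d/dt (½‖S(t)‖²) ≤ -η‖S(t)‖ for some η > 0 whenever S(t) ≠ 0. Then S reaches zero in finite time: there exists T ≤ ‖S(0)‖/η such that S(T) = 0. -/
/-! While `‖S‖ > 0`, the reaching condition forces `½‖S‖²` to be differentiable (its derivative is
negative, so it is not Lean's junk value `0`), hence so is `‖S‖ = √(2 · ½‖S‖²)`, with
`d‖S‖/dt = (d/dt ½‖S‖²) / ‖S‖ ≤ -η`. If `S` did not vanish on `[0, ‖S 0‖/η]`, the mean value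
inequality would give `‖S (‖S 0‖/η)‖ ≤ ‖S 0‖ - η · ‖S 0‖/η = 0`, a contradiction. -/

open Real

theorem HasDerivAt.of_half_sq {g : ℝ → ℝ} {d t : ℝ} (hg : ∀ τ, 0 ≤ g τ) (ht : g t ≠ 0)
    (h : HasDerivAt (fun τ => 1 / 2 * g τ ^ 2) d t) : HasDerivAt g (d / g t) t := by
  have hsqrt : ∀ τ, √(2 * (1 / 2 * g τ ^ 2)) = g τ := fun τ => by
    rw [← mul_assoc, mul_one_div_cancel two_ne_zero, one_mul, sqrt_sq (hg τ)]
  have := (h.const_mul 2).sqrt (by positivity)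
  simp only [hsqrt] at this
  convert this using 1
  field_simp

theorem deriv_le_of_deriv_half_sq_le {g : ℝ → ℝ} {η t : ℝ} (hη : 0 < η) (hg : ∀ τ, 0 ≤ g τ)
    (ht : 0 < g t) (h : deriv (fun τ => 1 / 2 * g τ ^ 2) t ≤ -η * g t) :
    HasDerivAt g (deriv g t) t ∧ deriv g t ≤ -η := by
  have hneg : deriv (fun τ => 1 / 2 * g τ ^ 2) t < 0 := h.trans_lt (by nlinarith)
  have hg' := (differentiableAt_of_deriv_ne_zero hneg.ne).hasDerivAt.of_half_sq hg ht.ne'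
  rw [hg'.deriv]
  exact ⟨hg', (div_le_iff₀ ht).2 h⟩

theorem exists_eq_zero_of_deriv_half_sq_le {g : ℝ → ℝ} {η : ℝ} (hη : 0 < η) (hg : ∀ τ, 0 ≤ g τ)
    (h : ∀ t, g t ≠ 0 → deriv (fun τ => 1 / 2 * g τ ^ 2) t ≤ -η * g t) :
    ∃ T, 0 ≤ T ∧ T ≤ g 0 / η ∧ g T = 0 := by
  set T₀ := g 0 / η
  have hT₀ : 0 ≤ T₀ := div_nonneg (hg 0) hη.le
  by_contra! hpos
  have hderiv : ∀ t ∈ Set.Icc 0 T₀, HasDerivAt g (deriv g t) t ∧ deriv g t ≤ -η :=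
    fun t ht => deriv_le_of_deriv_half_sq_le hη hg ((hg t).lt_of_ne' (hpos t ht.1 ht.2))
      (h t (hpos t ht.1 ht.2))
  have hmvt := (convex_Icc 0 T₀).image_sub_le_mul_sub_of_deriv_le
    (fun t ht => (hderiv t ht).1.continuousAt.continuousWithinAt)
    (fun t ht => (hderiv t (interior_subset ht)).1.differentiableAt.differentiableWithinAt)
    (fun t ht => (hderiv t (interior_subset ht)).2)
    0 ⟨le_rfl, hT₀⟩ T₀ ⟨hT₀, le_rfl⟩ hT₀
  have hηT₀ : η * T₀ = g 0 := mul_div_cancel₀ _ hη.ne'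
  have := (hg T₀).lt_of_ne' (hpos T₀ hT₀ le_rfl)
  linarith

theorem stmt9_general (n : ℕ) (S : ℝ → EuclideanSpace ℝ (Fin n)) (η : ℝ)
    (hη : 0 < η)
    (hineq : ∀ t : ℝ, S t ≠ 0 →
      deriv (fun τ => (1/2) * ‖S τ‖^2) t ≤ -η * ‖S t‖) :
    ∃ T : ℝ, 0 ≤ T ∧ T ≤ ‖S 0‖ / η ∧ S T = 0 := by
  obtain ⟨T, hT₀, hT, hST⟩ := exists_eq_zero_of_deriv_half_sq_le hη (fun t => norm_nonneg (S t))
    (fun t ht => hineq t (norm_ne_zero_iff.1 ht))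
  exact ⟨T, hT₀, hT, norm_eq_zero.1 hST⟩

theorem stmt9 (n : ℕ) (S : ℝ → EuclideanSpace ℝ (Fin n)) (η : ℝ)
    (hη : 0 < η) (hdiff : Differentiable ℝ S)
    (hineq : ∀ t : ℝ, S t ≠ 0 →
      deriv (fun τ => (1/2) * ‖S τ‖^2) t ≤ -η * ‖S t‖) :
    ∃ T : ℝ, 0 ≤ T ∧ T ≤ ‖S 0‖ / η ∧ S T = 0 :=
  stmt9_general n S η hη hineq
end

section
/- Let p, w ∈ ℝ² with ‖p‖ > r > 0, w ≠ 0. If h(p,w) = pᵀw + ‖w‖√(‖p‖²−r²) ≥ 0, then the distance from the origin to the ray {p + t·w : t ≥ 0} is at least r; i.e., ‖p + t w‖ ≥ r for all t ≥ 0. -/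
open Real RealInnerProductSpace

theorem stmt15 (p w : EuclideanSpace ℝ (Fin 2)) (r : ℝ)
    (hr : 0 < r) (hp : r < ‖p‖) (hw : w ≠ 0)
    (hsafe : 0 ≤ ⟪p, w⟫ + ‖w‖ * Real.sqrt (‖p‖^2 - r^2)) :
    ∀ t : ℝ, 0 ≤ t → r ≤ ‖p + t • w‖ := by
  intro t ht
  have hc : 0 ≤ ‖p‖^2 - r^2 := by nlinarith
  have hs : Real.sqrt (‖p‖^2 - r^2) ^ 2 = ‖p‖^2 - r^2 := Real.sq_sqrt hc
  have hs0 : 0 ≤ Real.sqrt (‖p‖^2 - r^2) := Real.sqrt_nonneg _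
  have hexp : ‖p + t • w‖^2 = ‖p‖^2 + 2 * t * ⟪p, w⟫ + t^2 * ‖w‖^2 := by
    rw [norm_add_sq_real, real_inner_smul_right, norm_smul]
    simp [mul_pow, abs_of_nonneg ht]
    ring
  have key : r^2 ≤ ‖p + t • w‖^2 := by
    rw [hexp]
    nlinarith [sq_nonneg (t * ‖w‖ - Real.sqrt (‖p‖^2 - r^2)), mul_nonneg (mul_nonneg ht (norm_nonneg w)) hs0, sq_nonneg (‖w‖ * Real.sqrt (‖p‖^2 - r^2))]
  nlinarith [norm_nonneg (p + t • w)]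
end

section
/- Let S : [0,∞) → ℝⁿ be absolutely continuous with ⟨S(t), Ṡ(t)⟩ ≤ −η‖S(t)‖ for a.e. t with ‖S(t)‖ > λ, where η, λ > 0. Then the set {‖S‖ ≤ λ} is reached in finite time T ≤ (‖S(0)‖ − λ)/η (when ‖S(0)‖ > λ) and is forward invariant. -/
/-! Outside the boundary layer, `‖S‖` is absolutely continuous with a.e. derivative
`⟪S, S'⟫ / ‖S‖ ≤ -η`, so by the fundamental theorem of calculus for absolutely continuous
functions it decreases at rate at least `η` there. Starting outside the layer, it therefore
reaches `λ` by time `(‖S 0‖ - λ) / η`; and after the last time in `[t₁, t₂]` at which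
`‖S‖ ≤ λ` it can only decrease, so it never leaves the layer. -/

open Real RealInnerProductSpace MeasureTheory intervalIntegral
open Set Filter

section IntervalIntegral

theorem AbsolutelyContinuousOnInterval.of_dist_le {X Y : Type*} [PseudoMetricSpace X]
    [PseudoMetricSpace Y] {f : ℝ → X} {g : ℝ → Y} {a b : ℝ}
    (hg : AbsolutelyContinuousOnInterval g a b)
    (h : ∀ x ∈ uIcc a b, ∀ y ∈ uIcc a b, dist (f x) (f y) ≤ dist (g x) (g y)) :
    AbsolutelyContinuousOnInterval f a b := by
  refine squeeze_zero' (Eventually.of_forall fun _ ↦ Finset.sum_nonneg fun _ _ ↦ dist_nonneg)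
    ?_ hg
  filter_upwards [mem_inf_of_right (mem_principal_self _)] with E hE
  exact Finset.sum_le_sum fun i hi ↦ h _ (hE.1 i hi).1 _ (hE.1 i hi).2

theorem AbsolutelyContinuousOnInterval.norm {E : Type*} [SeminormedAddCommGroup E] {f : ℝ → E}
    {a b : ℝ} (hf : AbsolutelyContinuousOnInterval f a b) :
    AbsolutelyContinuousOnInterval (fun t ↦ ‖f t‖) a b :=
  hf.of_dist_le fun _ _ _ _ ↦ (dist_norm_norm_le _ _).trans_eq (dist_eq_norm _ _).symm

theorem AbsolutelyContinuousOnInterval.sub_le_mul_of_ae_deriv_le {f : ℝ → ℝ} {a b C : ℝ}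
    (hf : AbsolutelyContinuousOnInterval f a b) (hab : a ≤ b)
    (hderiv : ∀ᵐ x, x ∈ Ioo a b → deriv f x ≤ C) :
    f b - f a ≤ C * (b - a) := by
  have hle : deriv f ≤ᵐ[volume.restrict (Icc a b)] fun _ ↦ C := by
    rw [← Measure.restrict_congr_set Ioo_ae_eq_Icc, EventuallyLE,
      ae_restrict_iff' measurableSet_Ioo]
    exact hderiv
  calc f b - f a = ∫ x in a..b, deriv f x := hf.integral_deriv_eq_sub.symm
    _ ≤ ∫ _ in a..b, C := integral_mono_ae_restrict hab hf.intervalIntegrable_deriv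
        intervalIntegrable_const hle
    _ = C * (b - a) := by rw [intervalIntegral.integral_const, smul_eq_mul, mul_comm]

variable {E : Type*} [NormedAddCommGroup E] [NormedSpace ℝ E]

theorem absolutelyContinuousOnInterval_of_eq_add_integral {f f' : ℝ → E} {a b : ℝ}
    (hf' : IntervalIntegrable f' volume a b)
    (hf : ∀ t ∈ uIcc a b, f t = f a + ∫ s in a..t, f' s) :
    AbsolutelyContinuousOnInterval f a b := by
  refine (hf'.norm.absolutelyContinuousOnInterval_intervalIntegral left_mem_uIcc).of_dist_le
    fun x hx y hy ↦ ?_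
  have hint : ∀ z ∈ uIcc a b, IntervalIntegrable f' volume a z := fun z hz ↦
    hf'.mono_set (uIcc_subset_uIcc_left hz)
  rw [dist_eq_norm, hf x hx, hf y hy, add_sub_add_left_eq_sub, Real.dist_eq,
    integral_interval_sub_left (hint x hx) (hint y hy),
    integral_interval_sub_left (hint x hx).norm (hint y hy).norm]
  exact norm_integral_le_abs_integral_norm

theorem eq_add_integral_of_forall_nonneg {f f' : ℝ → E}
    (hf' : ∀ t, 0 ≤ t → IntervalIntegrable f' volume 0 t)
    (hf : ∀ t, 0 ≤ t → f t = f 0 + ∫ s in (0:ℝ)..t, f' s) {a b : ℝ} (ha : 0 ≤ a)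
    (hab : a ≤ b) :
    ∀ t ∈ uIcc a b, f t = f a + ∫ s in a..t, f' s := by
  intro t ht
  have ht0 : 0 ≤ t := ha.trans (uIcc_of_le hab ▸ ht).1
  rw [hf t ht0, hf a ha, ← integral_interval_sub_left (hf' t ht0) (hf' a ha)]
  abel

theorem ae_hasDerivAt_of_eq_add_integral [CompleteSpace E] {f f' : ℝ → E} {a b : ℝ}
    (hf' : IntervalIntegrable f' volume a b)
    (hf : ∀ t ∈ uIcc a b, f t = f a + ∫ s in a..t, f' s) :
    ∀ᵐ x, x ∈ Ioo a b → HasDerivAt f (f' x) x := by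
  filter_upwards [hf'.ae_hasDerivAt_integral] with x hx hxab
  have hx_mem : x ∈ uIcc a b := Ioo_subset_Icc_self.trans Icc_subset_uIcc hxab
  refine ((hx hx_mem a left_mem_uIcc).const_add (f a)).congr_of_eventuallyEq ?_
  filter_upwards [Ioo_mem_nhds hxab.1 hxab.2] with t ht
  exact hf t (Ioo_subset_Icc_self.trans Icc_subset_uIcc ht)

end IntervalIntegral

theorem HasDerivAt.norm {E : Type*} [NormedAddCommGroup E] [InnerProductSpace ℝ E]
    {f : ℝ → E} {f' : E} {x : ℝ} (hf : HasDerivAt f f' x) (h0 : f x ≠ 0) :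
    HasDerivAt (fun t ↦ ‖f t‖) (⟪f x, f'⟫ / ‖f x‖) x := by
  have h := hf.norm_sq.sqrt (by positivity)
  simp only [Real.sqrt_sq (norm_nonneg _)] at h
  convert h using 1
  field_simp

theorem norm_le_sub_mul_of_inner_le {E : Type*} [NormedAddCommGroup E] [InnerProductSpace ℝ E]
    [CompleteSpace E] {f f' : ℝ → E} {a b η : ℝ} (hab : a ≤ b)
    (hf' : IntervalIntegrable f' volume a b)
    (hf : ∀ t ∈ uIcc a b, f t = f a + ∫ s in a..t, f' s)
    (hne : ∀ x ∈ Ioo a b, f x ≠ 0)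
    (hinner : ∀ᵐ x, x ∈ Ioo a b → ⟪f x, f' x⟫ ≤ -η * ‖f x‖) :
    ‖f b‖ ≤ ‖f a‖ - η * (b - a) := by
  have hdecay := (absolutelyContinuousOnInterval_of_eq_add_integral hf' hf).norm
    |>.sub_le_mul_of_ae_deriv_le hab (C := -η) ?_
  · linarith
  filter_upwards [ae_hasDerivAt_of_eq_add_integral hf' hf, hinner] with x hderiv hle hx
  rw [((hderiv hx).norm (hne x hx)).deriv, div_le_iff₀ (norm_pos_iff.2 (hne x hx))]
  exact hle hx

theorem exists_mem_Icc_le_forall_Ioc_lt {g : ℝ → ℝ} {a b c : ℝ} (hab : a ≤ b)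
    (hg : ContinuousOn g (Icc a b)) (ha : g a ≤ c) :
    ∃ t ∈ Icc a b, g t ≤ c ∧ ∀ s ∈ Ioc t b, c < g s := by
  have hK : IsCompact (Icc a b ∩ g ⁻¹' Iic c) := isCompact_Icc.of_isClosed_subset
    (hg.preimage_isClosed_of_isClosed isClosed_Icc isClosed_Iic) inter_subset_left
  obtain ⟨t, ⟨ht, htc⟩, hmax⟩ := hK.exists_isGreatest ⟨a, left_mem_Icc.2 hab, ha⟩
  exact ⟨t, ht, htc, fun s hs ↦ lt_of_not_ge fun hsc ↦
    hs.1.not_ge (hmax ⟨⟨ht.1.trans hs.1.le, hs.2⟩, hsc⟩)⟩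

/-- Boundary-layer (practical) sliding mode: `S` is absolutely continuous on `[0,∞)`
(expressed via the integral representation with a.e. derivative `S'`), and satisfies
`⟪S t, S' t⟫ ≤ -η ‖S t‖` for a.e. `t ≥ 0` with `‖S t‖ > λ`. Then the boundary layer
`{‖S‖ ≤ λ}` is reached in finite time `T ≤ (‖S 0‖ - λ)/η` and is forward invariant. -/
theorem stmt18 (n : ℕ) (S S' : ℝ → EuclideanSpace ℝ (Fin n)) (η lam : ℝ)
    (hη : 0 < η) (hlam : 0 < lam)
    (hloc : ∀ t : ℝ, 0 ≤ t → IntervalIntegrable S' volume 0 t)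
    (hAC : ∀ t : ℝ, 0 ≤ t → S t = S 0 + ∫ s in (0:ℝ)..t, S' s)
    (hineq : ∀ᵐ s : ℝ, 0 ≤ s → lam < ‖S s‖ → ⟪S s, S' s⟫ ≤ -η * ‖S s‖) :
    (lam < ‖S 0‖ →
      ∃ T : ℝ, 0 ≤ T ∧ T ≤ (‖S 0‖ - lam) / η ∧ ‖S T‖ ≤ lam) ∧
    (∀ t₁ t₂ : ℝ, 0 ≤ t₁ → t₁ ≤ t₂ → ‖S t₁‖ ≤ lam → ‖S t₂‖ ≤ lam) := by
  have hint (a b : ℝ) (ha : 0 ≤ a) (hab : a ≤ b) : IntervalIntegrable S' volume a b :=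
    (hloc a ha).symm.trans (hloc b (ha.trans hab))
  have hrepr (a b : ℝ) (ha : 0 ≤ a) (hab : a ≤ b) :=
    eq_add_integral_of_forall_nonneg hloc hAC ha hab
  have hdecay (a b : ℝ) (ha : 0 ≤ a) (hab : a ≤ b) (hgt : ∀ s ∈ Ioo a b, lam < ‖S s‖) :
      ‖S b‖ ≤ ‖S a‖ - η * (b - a) := by
    refine norm_le_sub_mul_of_inner_le hab (hint a b ha hab) (hrepr a b ha hab)
      (fun s hs ↦ norm_pos_iff.1 (hlam.trans (hgt s hs))) ?_
    filter_upwards [hineq] with s hs hsab using hs (ha.trans hsab.1.le) (hgt s hsab)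
  refine ⟨fun h0 ↦ ?_, fun t₁ t₂ ht₁ h12 hle ↦ ?_⟩
  · have hT : 0 ≤ (‖S 0‖ - lam) / η := div_nonneg (by linarith) hη.le
    by_contra! hfar
    have hdec := hdecay 0 _ le_rfl hT fun s hs ↦ hfar s hs.1.le hs.2.le
    rw [sub_zero, mul_div_cancel₀ _ hη.ne'] at hdec
    linarith [hfar _ hT le_rfl]
  · have hcont : ContinuousOn (fun t ↦ ‖S t‖) (Icc t₁ t₂) := uIcc_of_le h12 ▸
      (absolutelyContinuousOnInterval_of_eq_add_integral (hint t₁ t₂ ht₁ h12)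
        (hrepr t₁ t₂ ht₁ h12)).norm.continuousOn
    obtain ⟨c, hc, hcle, hgt⟩ := exists_mem_Icc_le_forall_Ioc_lt h12 hcont hle
    have hdec := hdecay c t₂ (ht₁.trans hc.1) hc.2 fun s hs ↦ hgt s (Ioo_subset_Ioc_self hs)
    linarith [mul_nonneg hη.le (sub_nonneg.2 hc.2)]
end
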